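/- arXiv:2210.02477 — 6 statements merged into one kernel-verified Lean document; each statement's English description precedes it below -/
import Mathlib

section
/- Let f : ℝ → ℝ be convex and differentiable, and let u, v : Ω → ℝ be functions on a set Ω with v ≥ -M and u ≥ -M pointwise for some constant M. Then pointwise on Ω: f'(-M)·((u-v)⁺)² ≤ (f(u) - f(v))·(u-v)⁺ ≤ f'(u)·((u-v)⁺)², where t⁺ = max(t,0). -/
theorem stmt1 {Ω : Type*} (f : ℝ → ℝ) (hdiff : Differentiable ℝ f)
    (hconv : ConvexOn ℝ Set.univ f) (M : ℝ) (u v : Ω → ℝ)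
    (hu : ∀ x, -M ≤ u x) (hv : ∀ x, -M ≤ v x) :
    ∀ x : Ω,
      deriv f (-M) * (max (u x - v x) 0) ^ 2 ≤ (f (u x) - f (v x)) * max (u x - v x) 0 ∧
      (f (u x) - f (v x)) * max (u x - v x) 0 ≤ deriv f (u x) * (max (u x - v x) 0) ^ 2 := by
  intro x
  rcases le_or_gt (u x - v x) 0 with h | h
  · simp [max_eq_right h]
  · have hvu : v x < u x := by linarith
    have hmax : max (u x - v x) 0 = u x - v x := max_eq_left h.le
    have hmono : MonotoneOn (deriv f) Set.univ :=
      hconv.monotoneOn_deriv fun y _ => hdiff.differentiableAt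
    have hslope1 : deriv f (v x) ≤ slope f (v x) (u x) :=
      hconv.deriv_le_slope (Set.mem_univ _) (Set.mem_univ _) hvu hdiff.differentiableAt
    have hslope2 : slope f (v x) (u x) ≤ deriv f (u x) :=
      hconv.slope_le_deriv (Set.mem_univ _) (Set.mem_univ _) hvu hdiff.differentiableAt
    have hM : deriv f (-M) ≤ deriv f (v x) :=
      hmono (Set.mem_univ _) (Set.mem_univ _) (hv x)
    rw [slope_def_field, div_le_iff₀ (by linarith), ← sub_nonneg] at hslope2
    rw [slope_def_field, le_div_iff₀ (by linarith), ← sub_nonneg] at hslope1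
    rw [hmax]
    constructor <;> nlinarith [sq_nonneg (u x - v x)]
end

section
/- Let f : ℝ → ℝ be C¹, convex, nondecreasing, with f(t) > 0 for t ≥ 0, and let δ ∈ (0,1). Let Φ_δ : [0,∞) → [0,∞) be the function defined implicitly by ∫₀^{Φ_δ(t)} dτ/f(τ) = (1-δ)∫₀ᵗ dτ/f(τ). Then Φ_δ is strictly increasing, 0 ≤ Φ_δ(t) ≤ t for all t ≥ 0, and Φ_δ'(t) ≤ 1 - δ for all t ≥ 0. -/
open Set Filter intervalIntegral
open scoped Topology

theorem stmt6 (f : ℝ → ℝ) (hf : ContDiff ℝ 1 f) (hconv : ConvexOn ℝ Set.univ f)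
    (hmono : Monotone f) (hpos : ∀ t : ℝ, 0 ≤ t → 0 < f t)
    (δ : ℝ) (hδ : δ ∈ Set.Ioo (0:ℝ) 1)
    (Φ : ℝ → ℝ) (hΦ0 : Φ 0 = 0) (hΦnn : ∀ t : ℝ, 0 ≤ t → 0 ≤ Φ t)
    (hΦdef : ∀ t : ℝ, 0 ≤ t →
      (∫ τ in (0:ℝ)..(Φ t), (f τ)⁻¹) = (1 - δ) * ∫ τ in (0:ℝ)..t, (f τ)⁻¹) :
    StrictMonoOn Φ (Set.Ici 0) ∧
    (∀ t : ℝ, 0 ≤ t → 0 ≤ Φ t ∧ Φ t ≤ t) ∧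
    (∀ t : ℝ, 0 ≤ t → deriv Φ t ≤ 1 - δ) := by
  have hcf : Continuous f := hf.continuous
  set F : ℝ → ℝ := fun x => ∫ τ in (0:ℝ)..x, (f τ)⁻¹ with hFdef
  have hδ1 : (0:ℝ) < 1 - δ := by linarith [hδ.2]
  -- measurability of the integrand
  have hm : ∀ b : ℝ, StronglyMeasurableAtFilter (fun τ => (f τ)⁻¹) (𝓝 b) :=
    fun b => (hcf.measurable.inv.stronglyMeasurable).aestronglyMeasurable.stronglyMeasurableAtFilter
  -- interval integrability on nonnegative intervals
  have hint : ∀ x y : ℝ, 0 ≤ x → x ≤ y →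
      IntervalIntegrable (fun τ => (f τ)⁻¹) MeasureTheory.volume x y := by
    intro x y hx hxy
    apply ContinuousOn.intervalIntegrable
    apply ContinuousOn.inv₀ (hcf.continuousOn)
    intro τ hτ
    rw [Set.uIcc_of_le hxy] at hτ
    exact (hpos τ (le_trans hx hτ.1)).ne'
  -- F has strict derivative (f x)⁻¹ at every x ≥ 0
  have hFd : ∀ x : ℝ, 0 ≤ x → HasStrictDerivAt F (f x)⁻¹ x := by
    intro x hx
    exact integral_hasStrictDerivAt_right (hint 0 x le_rfl hx) (hm x)
      ((hcf.continuousAt).inv₀ (hpos x hx).ne')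
  have hF0 : F 0 = 0 := integral_same
  -- strict monotonicity of F on nonnegative reals
  have hFlt : ∀ x y : ℝ, 0 ≤ x → x < y → F x < F y := by
    intro x y hx hxy
    have hadd : F x + (∫ τ in x..y, (f τ)⁻¹) = F y :=
      integral_add_adjacent_intervals (hint 0 x le_rfl hx) (hint x y hx hxy.le)
    have hpos' : 0 < ∫ τ in x..y, (f τ)⁻¹ := by
      apply intervalIntegral_pos_of_pos_on (hint x y hx hxy.le) _ hxy
      intro z hz
      exact inv_pos.2 (hpos z (le_trans hx hz.1.le))
    linarith
  have hFle : ∀ x y : ℝ, 0 ≤ x → x ≤ y → F x ≤ F y := by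
    intro x y hx hxy
    rcases eq_or_lt_of_le hxy with rfl | h
    · exact le_rfl
    · exact (hFlt x y hx h).le
  -- inverse comparison
  have hlt : ∀ x y : ℝ, 0 ≤ x → 0 ≤ y → F x < F y → x < y := by
    intro x y hx hy h
    by_contra hc
    push_neg at hc
    exact absurd h (not_lt.2 (hFle y x hy hc))
  have hFnn : ∀ t : ℝ, 0 ≤ t → 0 ≤ F t := by
    intro t ht
    have := hFle 0 t le_rfl ht
    rwa [hF0] at this
  -- Φ t ≤ t
  have hub : ∀ t : ℝ, 0 ≤ t → Φ t ≤ t := by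
    intro t ht
    by_contra hc
    push_neg at hc
    have h1 : F t < F (Φ t) := hFlt t (Φ t) ht hc
    have h2 : F (Φ t) = (1 - δ) * F t := hΦdef t ht
    have h3 : 0 ≤ F t := hFnn t ht
    nlinarith [hδ.1]
  -- strict monotonicity of Φ
  have hsm : StrictMonoOn Φ (Set.Ici 0) := by
    intro s hs t ht hst
    apply hlt _ _ (hΦnn s hs) (hΦnn t ht)
    have h1 : F (Φ s) = (1 - δ) * F s := hΦdef s hs
    have h2 : F (Φ t) = (1 - δ) * F t := hΦdef t ht
    rw [h1, h2]
    exact mul_lt_mul_of_pos_left (hFlt s t hs hst) hδ1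
  -- continuity of Φ within Ici 0
  have hcont : ∀ t : ℝ, 0 ≤ t → ContinuousWithinAt Φ (Set.Ici 0) t := by
    intro t ht
    have hFt : ContinuousAt F t := (hFd t ht).hasDerivAt.continuousAt
    have htend : Tendsto (fun y => (1 - δ) * F y) (𝓝[Set.Ici 0] t) (𝓝 ((1 - δ) * F t)) :=
      (hFt.tendsto.mono_left nhdsWithin_le_nhds).const_mul _
    rw [ContinuousWithinAt, tendsto_order]
    constructor
    · intro a ha
      rcases lt_or_ge a 0 with h | h
      · filter_upwards [self_mem_nhdsWithin] with y hy
        exact lt_of_lt_of_le h (hΦnn y hy)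
      · have hFa : F a < (1 - δ) * F t := by
          rw [← hΦdef t ht]; exact hFlt a (Φ t) h ha
        filter_upwards [htend.eventually (eventually_gt_nhds hFa), self_mem_nhdsWithin]
          with y h1 h2
        rw [← hΦdef y h2] at h1
        exact hlt a (Φ y) h (hΦnn y h2) h1
    · intro b hb
      have hb0 : 0 ≤ b := le_trans (hΦnn t ht) hb.le
      have hFb : (1 - δ) * F t < F b := by
        rw [← hΦdef t ht]; exact hFlt (Φ t) b (hΦnn t ht) hb
      filter_upwards [htend.eventually (eventually_lt_nhds hFb), self_mem_nhdsWithin]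
        with y h1 h2
      rw [← hΦdef y h2] at h1
      exact hlt (Φ y) b (hΦnn y h2) hb0 h1
  refine ⟨hsm, fun t ht => ⟨hΦnn t ht, hub t ht⟩, ?_⟩
  -- derivative bound
  intro t ht
  by_cases hdiff : DifferentiableAt ℝ Φ t
  · have hp : 0 ≤ Φ t := hΦnn t ht
    have hfp : (f (Φ t))⁻¹ ≠ 0 := inv_ne_zero (hpos _ hp).ne'
    have hFp := hFd (Φ t) hp
    set g : ℝ → ℝ := hFp.localInverse F ((f (Φ t))⁻¹) (Φ t) hfp with hg
    have hgF : ∀ᶠ x in 𝓝 (Φ t), g (F x) = x :=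
      (hFp.hasStrictFDerivAt_equiv hfp).eventually_left_inverse
    have hgd : HasStrictDerivAt g (((f (Φ t))⁻¹)⁻¹) (F (Φ t)) := hFp.to_localInverse hfp
    rw [inv_inv] at hgd
    have hFt := hFd t ht
    -- G := g ∘ ((1-δ) * F) has the right derivative at t
    have h1 : HasDerivAt (fun y => (1 - δ) * F y) ((1 - δ) * (f t)⁻¹) t :=
      (hFt.hasDerivAt).const_mul (1 - δ)
    have h2 : HasDerivAt g (f (Φ t)) ((1 - δ) * F t) := by
      have := hgd.hasDerivAt
      rwa [show F (Φ t) = (1 - δ) * F t from hΦdef t ht] at this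
    have hGd : HasDerivAt (fun y => g ((1 - δ) * F y)) (f (Φ t) * ((1 - δ) * (f t)⁻¹)) t :=
      HasDerivAt.comp t h2 h1
    -- Φ agrees with G near t within Ici 0
    have h3 : ∀ᶠ y in 𝓝[Set.Ici 0] t, g (F (Φ y)) = Φ y := (hcont t ht).eventually hgF
    have heq : Φ =ᶠ[𝓝[Set.Ici 0] t] fun y => g ((1 - δ) * F y) := by
      filter_upwards [h3, self_mem_nhdsWithin] with y hy1 hy2
      rw [← hy1, ← hΦdef y hy2]
    have hGt : Φ t = g ((1 - δ) * F t) := by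
      rw [← hΦdef t ht]
      exact (hgF.self_of_nhds).symm
    have hΦd : HasDerivWithinAt Φ (f (Φ t) * ((1 - δ) * (f t)⁻¹)) (Set.Ici 0) t :=
      (hGd.hasDerivWithinAt).congr_of_eventuallyEq heq hGt
    have hΦd2 : HasDerivWithinAt Φ (deriv Φ t) (Set.Ici 0) t :=
      hdiff.hasDerivAt.hasDerivWithinAt
    have hu : UniqueDiffWithinAt ℝ (Set.Ici 0) t := uniqueDiffOn_Ici 0 t ht
    have hder : deriv Φ t = f (Φ t) * ((1 - δ) * (f t)⁻¹) := by
      rw [← hΦd2.derivWithin hu, hΦd.derivWithin hu]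
    rw [hder]
    have hft := hpos t ht
    have hple : f (Φ t) ≤ f t := hmono (hub t ht)
    have hb1 : f (Φ t) * ((1 - δ) * (f t)⁻¹) ≤ f t * ((1 - δ) * (f t)⁻¹) :=
      mul_le_mul_of_nonneg_right hple (by positivity)
    have hb2 : f t * ((1 - δ) * (f t)⁻¹) = 1 - δ := by
      field_simp
    linarith
  · rw [deriv_zero_of_not_differentiableAt hdiff]
    linarith
end

section
/- Let f : ℝ → ℝ be C¹, convex, nondecreasing, with f(t) > 0 for t ≥ 0, δ ∈ (0,1), and let Φ_δ solve Φ_δ'(t)·f(t) = (1-δ)·f(Φ_δ(t)) with Φ_δ(0) = 0 and 0 ≤ Φ_δ(t) ≤ t. Then Φ_δ is concave on (0,∞); in particular Φ_δ''(t) = (1-δ)·(f(Φ_δ(t))/f(t)²)·(f'(Φ_δ(t))(1-δ) - f'(t)) ≤ 0 for all t > 0. -/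
theorem stmt7 (f : ℝ → ℝ) (hf : ContDiff ℝ 1 f) (hconv : ConvexOn ℝ Set.univ f)
    (hmono : Monotone f) (hpos : ∀ t : ℝ, 0 ≤ t → 0 < f t)
    (δ : ℝ) (hδ : δ ∈ Set.Ioo (0:ℝ) 1)
    (Φ : ℝ → ℝ) (hΦ0 : Φ 0 = 0)
    (hΦbd : ∀ t : ℝ, 0 ≤ t → 0 ≤ Φ t ∧ Φ t ≤ t)
    (hODE : ∀ t : ℝ, 0 < t → HasDerivAt Φ ((1 - δ) * f (Φ t) / f t) t) :
    ConcaveOn ℝ (Set.Ioi 0) Φ ∧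
    ∀ t : ℝ, 0 < t →
      deriv (deriv Φ) t
        = (1 - δ) * (f (Φ t) / (f t) ^ 2) * (deriv f (Φ t) * (1 - δ) - deriv f t) ∧
      deriv (deriv Φ) t ≤ 0 := by
  have hfd : Differentiable ℝ f := hf.differentiable one_ne_zero
  have hf'mono : Monotone (deriv f) := by
    have := hconv.monotoneOn_deriv (fun x _ => hfd x)
    exact fun a b hab => this (Set.mem_univ a) (Set.mem_univ b) hab
  have hf'nonneg : ∀ x : ℝ, 0 ≤ deriv f x := by
    intro x
    have h1 := hconv.slope_le_deriv (Set.mem_univ (x - 1)) (Set.mem_univ x)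
      (show x - 1 < x by linarith) (hfd x)
    rw [slope_def_field] at h1
    have h2 : 0 ≤ (f x - f (x - 1)) / (x - (x - 1)) := by
      apply div_nonneg
      · have := hmono (show x - 1 ≤ x by linarith)
        linarith
      · linarith
    linarith
  set F : ℝ → ℝ := fun s => (1 - δ) * f (Φ s) / f s with hF
  have hFderiv : ∀ t : ℝ, 0 < t →
      HasDerivAt F ((1 - δ) * (f (Φ t) / (f t) ^ 2) *
        (deriv f (Φ t) * (1 - δ) - deriv f t)) t := by
    intro t ht
    have hft : 0 < f t := hpos t ht.le
    have h1 : HasDerivAt (fun s => f (Φ s))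
        (deriv f (Φ t) * ((1 - δ) * f (Φ t) / f t)) t :=
      (hfd (Φ t)).hasDerivAt.comp t (hODE t ht)
    have h2 : HasDerivAt f (deriv f t) t := (hfd t).hasDerivAt
    have h3 : HasDerivAt (fun s => (1 - δ) * f (Φ s))
        ((1 - δ) * (deriv f (Φ t) * ((1 - δ) * f (Φ t) / f t))) t := h1.const_mul _
    have h4 := h3.div h2 hft.ne'
    refine h4.congr_deriv ?_
    field_simp
  have hderivΦ : ∀ t : ℝ, 0 < t → deriv Φ t = F t := fun t ht => (hODE t ht).deriv
  have hderiv2 : ∀ t : ℝ, 0 < t →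
      deriv (deriv Φ) t = (1 - δ) * (f (Φ t) / (f t) ^ 2) *
        (deriv f (Φ t) * (1 - δ) - deriv f t) := by
    intro t ht
    have heq : deriv Φ =ᶠ[nhds t] F :=
      Filter.eventuallyEq_of_mem (Ioi_mem_nhds ht) (fun s hs => hderivΦ s hs)
    rw [heq.deriv_eq]
    exact (hFderiv t ht).deriv
  have hnonpos : ∀ t : ℝ, 0 < t →
      (1 - δ) * (f (Φ t) / (f t) ^ 2) * (deriv f (Φ t) * (1 - δ) - deriv f t) ≤ 0 := by
    intro t ht
    obtain ⟨hΦ0', hΦt⟩ := hΦbd t ht.le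
    have hft : 0 < f t := hpos t ht.le
    have hfΦ : 0 < f (Φ t) := hpos _ hΦ0'
    apply mul_nonpos_of_nonneg_of_nonpos
    · have h1δ : (0:ℝ) < 1 - δ := by linarith [hδ.2]
      exact mul_nonneg h1δ.le (div_nonneg hfΦ.le (sq_nonneg _))
    · have h1 : deriv f (Φ t) ≤ deriv f t := hf'mono hΦt
      have h2 : deriv f (Φ t) * (1 - δ) ≤ deriv f (Φ t) := by
        nlinarith [hf'nonneg (Φ t), hδ.1, hδ.2]
      linarith
  constructor
  · have hΦdiff : ∀ t ∈ Set.Ioi (0:ℝ), HasDerivAt Φ (F t) t := fun t ht => hODE t ht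
    have hΦcont : ContinuousOn Φ (Set.Ioi 0) :=
      fun t ht => ((hΦdiff t ht).differentiableAt).continuousAt.continuousWithinAt
    refine AntitoneOn.concaveOn_of_deriv (convex_Ioi 0) hΦcont ?_ ?_
    · rw [interior_Ioi]
      exact fun t ht => ((hΦdiff t ht).differentiableAt).differentiableWithinAt
    · rw [interior_Ioi]
      have hFdiff : ∀ t ∈ Set.Ioi (0:ℝ), HasDerivAt (deriv Φ)
          ((1 - δ) * (f (Φ t) / (f t) ^ 2) *
            (deriv f (Φ t) * (1 - δ) - deriv f t)) t := by
        intro t ht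
        have heq : F =ᶠ[nhds t] deriv Φ :=
          Filter.eventuallyEq_of_mem (Ioi_mem_nhds ht) (fun s hs => (hderivΦ s hs).symm)
        exact (hFderiv t ht).congr_of_eventuallyEq heq.symm
      have hcont : ContinuousOn (deriv Φ) (Set.Ioi 0) :=
        fun t ht => ((hFdiff t ht).differentiableAt).continuousAt.continuousWithinAt
      refine antitoneOn_of_deriv_nonpos (convex_Ioi 0) hcont ?_ ?_
      · rw [interior_Ioi]
        exact fun t ht => ((hFdiff t ht).differentiableAt).differentiableWithinAt
      · rw [interior_Ioi]
        intro t ht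
        rw [hderiv2 t ht]
        exact hnonpos t ht
  · intro t ht
    exact ⟨hderiv2 t ht, (hderiv2 t ht) ▸ hnonpos t ht⟩
end

section
/- Let f : ℝ → ℝ be C¹, convex, nondecreasing, with f(t) > 0 for t ≥ 0, and δ ∈ (0,1). Let Φ_δ be defined by ∫₀^{Φ_δ(t)} dτ/f(τ) = (1-δ)∫₀ᵗ dτ/f(τ) with 0 ≤ Φ_δ(t) ≤ t. Then f(Φ_δ(t)) ≤ (C₀/δ)(1 + t) for all t ≥ 0, where C₀ = max{f(1), φ(1)⁻¹} and φ(t) = ∫₀ᵗ dτ/f(τ). -/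
theorem stmt8 (f : ℝ → ℝ) (hf : ContDiff ℝ 1 f) (hconv : ConvexOn ℝ Set.univ f)
    (hmono : Monotone f) (hpos : ∀ t : ℝ, 0 ≤ t → 0 < f t)
    (δ : ℝ) (hδ : δ ∈ Set.Ioo (0:ℝ) 1)
    (φ Φ : ℝ → ℝ) (hφ : ∀ t : ℝ, φ t = ∫ τ in (0:ℝ)..t, (f τ)⁻¹)
    (hΦdef : ∀ t : ℝ, 0 ≤ t → φ (Φ t) = (1 - δ) * φ t)
    (hΦbd : ∀ t : ℝ, 0 ≤ t → 0 ≤ Φ t ∧ Φ t ≤ t) :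
    ∀ t : ℝ, 0 ≤ t → f (Φ t) ≤ (max (f 1) (φ 1)⁻¹ / δ) * (1 + t) := by
  obtain ⟨hδ0, hδ1⟩ := hδ
  have hcontg : ContinuousOn (fun τ => (f τ)⁻¹) (Set.Ici 0) :=
    (hf.continuous.continuousOn).inv₀ (fun x hx => (hpos x hx).ne')
  have hint : ∀ a b : ℝ, 0 ≤ a → a ≤ b →
      IntervalIntegrable (fun τ => (f τ)⁻¹) MeasureTheory.volume a b := by
    intro a b ha hab
    apply ContinuousOn.intervalIntegrable
    apply hcontg.mono
    rw [Set.uIcc_of_le hab]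
    exact fun x hx => le_trans ha hx.1
  have hf1 : 0 < f 1 := hpos 1 zero_le_one
  -- φ 1 > 0
  have hφ1 : (f 1)⁻¹ ≤ φ 1 := by
    rw [hφ 1]
    have := intervalIntegral.integral_mono_on (μ := MeasureTheory.volume)
      (f := fun _ => (f 1)⁻¹) (g := fun τ => (f τ)⁻¹) zero_le_one
      (intervalIntegrable_const) (hint 0 1 le_rfl zero_le_one)
      (fun x hx => by
        have : f x ≤ f 1 := hmono hx.2
        exact inv_anti₀ (hpos x hx.1) this)
    simpa using this
  have hφ1pos : 0 < φ 1 := lt_of_lt_of_le (inv_pos.mpr hf1) hφ1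
  have hmax : 0 < max (f 1) (φ 1)⁻¹ := lt_max_of_lt_left hf1
  intro t ht
  obtain ⟨hΦ0, hΦt⟩ := hΦbd t ht
  have hfΦpos : 0 < f (Φ t) := hpos _ hΦ0
  have h1t : (1:ℝ) ≤ 1 + t := by linarith
  rcases le_or_gt t 1 with h | h
  · -- small t
    have h1 : f (Φ t) ≤ f 1 := hmono (le_trans hΦt h)
    have h2 : f 1 ≤ max (f 1) (φ 1)⁻¹ := le_max_left _ _
    have h3 : max (f 1) (φ 1)⁻¹ ≤ max (f 1) (φ 1)⁻¹ / δ * (1 + t) := by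
      have hδinv : 1 ≤ 1 / δ := by
        rw [le_div_iff₀ hδ0]; linarith
      have hd : 0 < max (f 1) (φ 1)⁻¹ / δ := div_pos hmax hδ0
      have hstep : max (f 1) (φ 1)⁻¹ ≤ max (f 1) (φ 1)⁻¹ / δ := by
        rw [le_div_iff₀ hδ0]; nlinarith
      nlinarith
    linarith
  · -- t > 1
    have ht1 : (1:ℝ) ≤ t := h.le
    -- φ 1 ≤ φ t
    have hφmono : φ 1 ≤ φ t := by
      have heq : φ t - φ 1 = ∫ τ in (1:ℝ)..t, (f τ)⁻¹ := by
        rw [hφ t, hφ 1]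
        rw [intervalIntegral.integral_interval_sub_left (hint 0 t le_rfl ht)
          (hint 0 1 le_rfl zero_le_one)]
      have hnn : 0 ≤ ∫ τ in (1:ℝ)..t, (f τ)⁻¹ :=
        intervalIntegral.integral_nonneg ht1
          (fun x hx => (inv_pos.mpr (hpos x (by linarith [hx.1]))).le)
      linarith
    -- δ φ t = ∫_{Φt}^t 1/f ≤ (t - Φt) (f (Φ t))⁻¹
    have hkey : δ * φ t ≤ (t - Φ t) * (f (Φ t))⁻¹ := by
      have heq : δ * φ t = ∫ τ in (Φ t)..t, (f τ)⁻¹ := by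
        have := hΦdef t ht
        have h2 : φ t - φ (Φ t) = ∫ τ in (Φ t)..t, (f τ)⁻¹ := by
          rw [hφ t, hφ (Φ t)]
          rw [intervalIntegral.integral_interval_sub_left (hint 0 t le_rfl ht)
            (hint 0 (Φ t) le_rfl hΦ0)]
        rw [this] at h2; linarith
      rw [heq]
      have := intervalIntegral.integral_mono_on (μ := MeasureTheory.volume)
        (f := fun τ => (f τ)⁻¹) (g := fun _ => (f (Φ t))⁻¹) hΦt
        (hint (Φ t) t hΦ0 hΦt) intervalIntegrable_const
        (fun x hx => inv_anti₀ hfΦpos (hmono hx.1))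
      simpa [mul_comm] using this
    -- f(Φt) * (δ * φ 1) ≤ 1 + t
    have hb : f (Φ t) * (δ * φ 1) ≤ 1 + t := by
      have h1 : f (Φ t) * (δ * φ 1) ≤ f (Φ t) * (δ * φ t) := by
        apply mul_le_mul_of_nonneg_left _ hfΦpos.le
        exact mul_le_mul_of_nonneg_left hφmono hδ0.le
      have h2 : f (Φ t) * (δ * φ t) ≤ f (Φ t) * ((t - Φ t) * (f (Φ t))⁻¹) :=
        mul_le_mul_of_nonneg_left hkey hfΦpos.le
      have h3 : f (Φ t) * ((t - Φ t) * (f (Φ t))⁻¹) = t - Φ t := by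
        field_simp
      linarith
    have hδφ : 0 < δ * φ 1 := mul_pos hδ0 hφ1pos
    have h4 : f (Φ t) ≤ (1 + t) / (δ * φ 1) := (le_div_iff₀ hδφ).mpr hb
    have h5 : (1 + t) / (δ * φ 1) = (φ 1)⁻¹ / δ * (1 + t) := by
      rw [div_eq_mul_inv, mul_inv]; ring
    have h6 : (φ 1)⁻¹ / δ * (1 + t) ≤ max (f 1) (φ 1)⁻¹ / δ * (1 + t) := by
      gcongr
      exact le_max_right _ _
    linarith
end

section
/- Let φ : (0,∞) → ℝ be increasing and concave, and let Φ : (0,∞) → (0,∞) satisfy φ(Φ(b)) = (1-δ)φ(b) and Φ(b) ≤ b for all b > 0 and some δ ∈ (0,1). Suppose φ'(a) = 1/f(a) for an increasing positive function f. Then δ·f(Φ(b)) ≤ b/φ(b) for all b > 0. -/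
theorem stmt9 (f φ Φ : ℝ → ℝ) (δ : ℝ) (hδ : δ ∈ Set.Ioo (0:ℝ) 1)
    (hfpos : ∀ t : ℝ, 0 < t → 0 < f t) (hfmono : MonotoneOn f (Set.Ioi 0))
    (hφmono : StrictMonoOn φ (Set.Ioi 0)) (hφconc : ConcaveOn ℝ (Set.Ioi 0) φ)
    (hφderiv : ∀ a : ℝ, 0 < a → HasDerivAt φ (1 / f a) a)
    (hφpos : ∀ t : ℝ, 0 < t → 0 < φ t)
    (hΦpos : ∀ b : ℝ, 0 < b → 0 < Φ b) (hΦle : ∀ b : ℝ, 0 < b → Φ b ≤ b)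
    (hΦdef : ∀ b : ℝ, 0 < b → φ (Φ b) = (1 - δ) * φ b) :
    ∀ b : ℝ, 0 < b → δ * f (Φ b) ≤ b / φ b := by
  intro b hb
  obtain ⟨hδ0, hδ1⟩ := hδ
  have hΦb := hΦpos b hb
  have hfΦ := hfpos _ hΦb
  have hφb := hφpos b hb
  have hlt : Φ b < b := by
    rcases lt_or_eq_of_le (hΦle b hb) with h | h
    · exact h
    · exfalso
      have := hΦdef b hb
      rw [h] at this
      nlinarith
  have hslope := hφconc.slope_le_of_hasDerivAt hΦb (Set.mem_Ioi.mpr hb) hlt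
    (hφderiv _ hΦb)
  rw [slope_def_field] at hslope
  have hdiff : φ b - φ (Φ b) = δ * φ b := by
    rw [hΦdef b hb]; ring
  rw [hdiff] at hslope
  have h1 : δ * φ b * f (Φ b) ≤ b - Φ b := by
    have h2 := (div_le_div_iff₀ (sub_pos.mpr hlt) hfΦ).mp hslope
    nlinarith
  rw [le_div_iff₀ hφb]
  nlinarith
end

section
/- Let s ∈ (0,1), p ∈ [1,∞) with sp ≥ 1, and let u ∈ W^{s,p}(B₁) where B₁ ⊂ ℝⁿ is the unit ball. If |{x ∈ B₁ : u(x) ≤ a}| > 0 and |{x ∈ B₁ : u(x) ≥ b}| > 0 for some real numbers a < b, then |{x ∈ B₁ : a < u(x) < b}| > 0, where |·| denotes Lebesgue measure. -/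
set_option maxHeartbeats 1000000

open MeasureTheory Metric Set Filter
open scoped ENNReal Topology

namespace Stmt10Aux

variable {V : Type*} [NormedAddCommGroup V] [NormedSpace ℝ V] [MeasurableSpace V]
  [BorelSpace V] [FiniteDimensional ℝ V]

omit [MeasurableSpace V] [BorelSpace V] [FiniteDimensional ℝ V] in
private lemma convex_norm_le {x z : V} {t : ℝ} (ht0 : 0 ≤ t) (ht1 : t ≤ 1) :
    ‖x + t • (z - x)‖ ≤ max ‖x‖ ‖z‖ := by
  have hxz : x + t • (z - x) = (1 - t) • x + t • z := by module
  rw [hxz]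
  calc ‖(1 - t) • x + t • z‖ ≤ (1 - t) * ‖x‖ + t * ‖z‖ := by
        refine (norm_add_le _ _).trans ?_
        rw [norm_smul, norm_smul, Real.norm_of_nonneg (by linarith), Real.norm_of_nonneg ht0]
    _ ≤ (1 - t) * max ‖x‖ ‖z‖ + t * max ‖x‖ ‖z‖ := by
        gcongr
        · exact le_max_left _ _
        · exact le_max_right _ _
    _ = max ‖x‖ ‖z‖ := by ring

private lemma telescope (μ : Measure V) [μ.IsAddHaarMeasure]
    (E F M : Set V)
    (hsub : ∀ x, x ∈ ball (0:V) 1 → x ∉ E → x ∈ F ∪ M) (hM : μ M = 0)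
    (x₀ y₀ : V) (ρ : ℝ) (hρ : 0 < ρ)
    (hsmall : max ‖x₀‖ (‖y₀‖ + ρ) + ρ < 1)
    (hEx : ENNReal.ofReal (3/4) * μ (closedBall x₀ ρ) ≤ μ (E ∩ closedBall x₀ ρ))
    (hEy : μ (E ∩ closedBall y₀ (2*ρ)) ≤ ENNReal.ofReal (1/4) * μ (closedBall x₀ ρ))
    (m : ℕ) (hm : 1 ≤ m) (h : V) (hh : ‖(m:ℝ) • h - (y₀ - x₀)‖ ≤ ρ) :
    μ (closedBall x₀ ρ) ≤ 2 * m * μ (E ∩ (fun x => x + h) ⁻¹' F) := by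
  set g : ℝ≥0∞ := μ (E ∩ (fun x => x + h) ⁻¹' F) with hg
  set c : ℕ → V := fun k => x₀ + (k : ℝ) • h with hc
  set z : V := x₀ + (m : ℝ) • h with hzdef
  have hm0 : (m : ℝ) ≠ 0 := Nat.cast_ne_zero.mpr (by omega)
  have hzy : ‖z - y₀‖ ≤ ρ := by
    have : z - y₀ = (m:ℝ) • h - (y₀ - x₀) := by rw [hzdef]; abel
    rw [this]; exact hh
  have hzn : ‖z‖ ≤ ‖y₀‖ + ρ := by
    calc ‖z‖ = ‖y₀ + (z - y₀)‖ := congrArg Norm.norm (by abel)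
      _ ≤ ‖y₀‖ + ‖z - y₀‖ := norm_add_le _ _
      _ ≤ ‖y₀‖ + ρ := by linarith
  have hck : ∀ k : ℕ, k ≤ m → ‖c k‖ ≤ max ‖x₀‖ (‖y₀‖ + ρ) := by
    intro k hk
    have hkm : (k : ℝ) / m * (m : ℝ) = (k : ℝ) := div_mul_cancel₀ _ hm0
    have hckz : c k = x₀ + ((k : ℝ)/m) • (z - x₀) := by
      rw [hc, hzdef]
      simp only [add_sub_cancel_left, smul_smul, hkm]
    rw [hckz]
    refine (convex_norm_le (by positivity) ?_).trans (max_le_max le_rfl hzn)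
    rw [div_le_one (by positivity)]
    exact_mod_cast hk
  have hcball : ∀ k : ℕ, k ≤ m → closedBall (c k) ρ ⊆ ball (0:V) 1 := by
    intro k hk y hy
    rw [mem_closedBall, dist_eq_norm] at hy
    rw [mem_ball, dist_zero_right]
    calc ‖y‖ = ‖(y - c k) + c k‖ := congrArg Norm.norm (by abel)
      _ ≤ ‖y - c k‖ + ‖c k‖ := norm_add_le _ _
      _ ≤ ρ + max ‖x₀‖ (‖y₀‖ + ρ) := add_le_add hy (hck k hk)
      _ < 1 := by linarith
  have hstep : ∀ k : ℕ, k < m →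
      μ (E ∩ closedBall (c k) ρ) ≤ μ (E ∩ closedBall (c (k+1)) ρ) + g := by
    intro k hk
    have hc1 : c (k+1) = c k + h := by
      rw [hc]; push_cast; rw [add_smul, one_smul]; abel
    set S : Set V := E ∩ closedBall (c k) ρ with hS
    have h1 : μ S ≤ μ (S ∩ (fun x => x + h) ⁻¹' E) + μ (S \ (fun x => x + h) ⁻¹' E) :=
      measure_le_inter_add_diff μ S _
    have h2 : S ∩ (fun x => x + h) ⁻¹' E ⊆ (fun x => x + h) ⁻¹' (E ∩ closedBall (c (k+1)) ρ) := by
      rintro x ⟨⟨hxE, hxB⟩, hxh⟩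
      refine ⟨hxh, ?_⟩
      rw [mem_closedBall, hc1, dist_add_right]
      exact hxB
    have h3 : μ ((fun x => x + h) ⁻¹' (E ∩ closedBall (c (k+1)) ρ))
        = μ (E ∩ closedBall (c (k+1)) ρ) := measure_preimage_add_right μ h _
    have h4 : S \ (fun x => x + h) ⁻¹' E ⊆
        (E ∩ (fun x => x + h) ⁻¹' F) ∪ ((fun x => x + h) ⁻¹' M) := by
      rintro x ⟨⟨hxE, hxB⟩, hxh⟩
      have hxb : x + h ∈ ball (0:V) 1 := by
        refine hcball (k+1) hk ?_
        rw [mem_closedBall, hc1, dist_add_right]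
        exact hxB
      rcases hsub _ hxb hxh with hF | hM'
      · exact Or.inl ⟨hxE, hF⟩
      · exact Or.inr hM'
    have h5 : μ (S \ (fun x => x + h) ⁻¹' E) ≤ g := by
      refine (measure_mono h4).trans ?_
      refine (measure_union_le _ _).trans ?_
      rw [measure_preimage_add_right μ h M, hM, add_zero]
    calc μ (E ∩ closedBall (c k) ρ) = μ S := rfl
      _ ≤ μ (S ∩ (fun x => x + h) ⁻¹' E) + μ (S \ (fun x => x + h) ⁻¹' E) := h1
      _ ≤ μ (E ∩ closedBall (c (k+1)) ρ) + g := by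
          refine add_le_add ?_ h5
          refine (measure_mono h2).trans ?_
          rw [h3]
  have hiter : ∀ j : ℕ, j ≤ m →
      μ (E ∩ closedBall x₀ ρ) ≤ μ (E ∩ closedBall (c j) ρ) + j * g := by
    intro j
    induction j with
    | zero => intro _; simp [hc]
    | succ j ih =>
      intro hj1
      have h6 := ih (le_trans (Nat.le_succ j) hj1)
      have h7 := hstep j (by omega)
      calc μ (E ∩ closedBall x₀ ρ) ≤ μ (E ∩ closedBall (c j) ρ) + j * g := h6
        _ ≤ (μ (E ∩ closedBall (c (j+1)) ρ) + g) + j * g := by gcongr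
        _ = μ (E ∩ closedBall (c (j+1)) ρ) + (j+1 : ℕ) * g := by
            push_cast; ring
  have hend : μ (E ∩ closedBall (c m) ρ) ≤ ENNReal.ofReal (1/4) * μ (closedBall x₀ ρ) := by
    refine le_trans (measure_mono ?_) hEy
    refine inter_subset_inter_right E ?_
    intro y hy
    rw [mem_closedBall] at hy ⊢
    calc dist y y₀ ≤ dist y (c m) + dist (c m) y₀ := dist_triangle _ _ _
      _ ≤ ρ + ρ := by
          refine add_le_add hy ?_
          rw [dist_eq_norm]; exact hzy
      _ = 2 * ρ := by ring
  set X : ℝ≥0∞ := μ (closedBall x₀ ρ) with hX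
  have hXfin : X ≠ ⊤ := (IsCompact.measure_lt_top (isCompact_closedBall _ _)).ne
  have hmain : ENNReal.ofReal (3/4) * X ≤ ENNReal.ofReal (1/4) * X + m * g :=
    hEx.trans ((hiter m le_rfl).trans (add_le_add hend le_rfl))
  have hsplit : ENNReal.ofReal (3/4) * X
      = ENNReal.ofReal (1/4) * X + ENNReal.ofReal (1/2) * X := by
    rw [← add_mul, ← ENNReal.ofReal_add (by norm_num) (by norm_num)]
    norm_num
  rw [hsplit] at hmain
  have hcancel : ENNReal.ofReal (1/2) * X ≤ m * g :=
    (ENNReal.add_le_add_iff_left (ENNReal.mul_ne_top ENNReal.ofReal_ne_top hXfin)).mp hmain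
  have h8 : (2:ℝ≥0∞) * (ENNReal.ofReal (1/2) * X) ≤ 2 * (m * g) :=
    mul_le_mul_right hcancel 2
  calc X = (2 * ENNReal.ofReal (1/2)) * X := by
        rw [show (2:ℝ≥0∞) = ENNReal.ofReal 2 by simp, ← ENNReal.ofReal_mul (by norm_num)]
        norm_num
    _ = 2 * (ENNReal.ofReal (1/2) * X) := by ring
    _ ≤ 2 * (m * g) := h8
    _ = 2 * m * g := by ring

omit [NormedSpace ℝ V] [MeasurableSpace V] [BorelSpace V] [FiniteDimensional ℝ V] in
private lemma real_calc (n' : ℕ) {q ρ d mR : ℝ} (hq : (n':ℝ) + 1 ≤ q) (hρ : 0 < ρ) (hd : 0 < d)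
    (hm : 1 ≤ mR) :
    ρ^n' * ρ^n' / (2*(d+ρ)^q) ≤ 1/(2*mR) * ρ^n' * ((ρ/mR)^n' * (1/(((d+ρ)/mR)^q))) := by
  have hmR : 0 < mR := by linarith
  have hD : 0 < d + ρ := by linarith
  have hDq : 0 < (d+ρ)^q := Real.rpow_pos_of_pos hD q
  have hMq : mR ^ n' * mR ≤ mR ^ q := by
    calc mR ^ n' * mR = mR ^ (n'+1 : ℕ) := (pow_succ mR n').symm
      _ = mR ^ ((n'+1 : ℕ) : ℝ) := (Real.rpow_natCast mR (n'+1)).symm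
      _ ≤ mR ^ q := Real.rpow_le_rpow_of_exponent_le hm (by push_cast; exact hq)
  have hMq0 : 0 < mR ^ q := Real.rpow_pos_of_pos hmR q
  rw [Real.div_rpow hD.le hmR.le, div_pow]
  rw [div_le_iff₀ (by positivity)]
  have hρn : 0 < ρ ^ n' := by positivity
  have expand : 1/(2*mR) * ρ^n' * (ρ^n'/mR^n' * (1/((d+ρ)^q / mR^q))) * (2*(d+ρ)^q)
      = (ρ^n' * ρ^n') * ((mR^q / (mR^n' * mR))) := by
    field_simp
  rw [expand]
  nlinarith [mul_pos hρn hρn, (one_le_div (by positivity : (0:ℝ) < mR^n' * mR)).mpr hMq]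

private lemma core (μ : Measure V) [μ.IsAddHaarMeasure]
    (q : ℝ) (hq : (Module.finrank ℝ V : ℝ) + 1 ≤ q)
    (E F M : Set V) (hE : MeasurableSet E) (hF : MeasurableSet F)
    (hEB : E ⊆ ball 0 1) (hFB : F ⊆ ball 0 1)
    (hdisj : ∀ x, x ∈ E → x ∈ F → False)
    (hsub : ∀ x, x ∈ ball (0:V) 1 → x ∉ E → x ∈ F ∪ M) (hM : μ M = 0)
    (hEpos : μ E ≠ 0) (hFpos : μ F ≠ 0) :
    ∫⁻ x, ∫⁻ y, E.indicator 1 x * F.indicator 1 y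
      * ENNReal.ofReal (1 / ‖x - y‖ ^ q) ∂μ ∂μ = ⊤ := by
  classical
  set n' : ℕ := Module.finrank ℝ V with hn'
  have hq0 : 0 < q := lt_of_lt_of_le (by positivity) hq
  -- density points
  obtain ⟨x₀, hx₀E, hx₀⟩ : ∃ x₀, x₀ ∈ E ∧ Tendsto
      (fun r => μ (E ∩ closedBall x₀ r) / μ (closedBall x₀ r)) (𝓝[>] 0) (𝓝 1) := by
    have hBes := Besicovitch.ae_tendsto_measure_inter_div_of_measurableSet μ hE
    obtain ⟨x₀, hx₀E, hx₀⟩ :=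
      Measure.exists_mem_of_measure_ne_zero_of_ae hEpos (ae_restrict_of_ae hBes)
    refine ⟨x₀, hx₀E, ?_⟩
    rwa [Set.indicator_of_mem hx₀E, Pi.one_apply] at hx₀
  obtain ⟨y₀, hy₀F, hy₀⟩ : ∃ y₀, y₀ ∈ F ∧ Tendsto
      (fun r => μ (F ∩ closedBall y₀ r) / μ (closedBall y₀ r)) (𝓝[>] 0) (𝓝 1) := by
    have hBes := Besicovitch.ae_tendsto_measure_inter_div_of_measurableSet μ hF
    obtain ⟨y₀, hy₀F, hy₀⟩ :=
      Measure.exists_mem_of_measure_ne_zero_of_ae hFpos (ae_restrict_of_ae hBes)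
    refine ⟨y₀, hy₀F, ?_⟩
    rwa [Set.indicator_of_mem hy₀F, Pi.one_apply] at hy₀
  set w : V := y₀ - x₀ with hw
  set d : ℝ := ‖w‖ with hdd
  have hd : 0 < d := by
    rw [hdd, norm_pos_iff, hw, sub_ne_zero]
    intro hxy
    exact hdisj x₀ hx₀E (hxy ▸ hy₀F)
  set T : ℝ := max ‖x₀‖ ‖y₀‖ with hT
  have hT1 : T < 1 := by
    rw [hT, max_lt_iff]
    exact ⟨mem_ball_zero_iff.mp (hEB hx₀E), mem_ball_zero_iff.mp (hFB hy₀F)⟩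
  set δ : ℝ≥0∞ := ENNReal.ofReal (1/(4 * 2^n')) with hδ
  have hδ0 : δ ≠ 0 := by
    rw [hδ]
    simp only [ne_eq, ENNReal.ofReal_eq_zero, not_le]
    positivity
  have hδ1 : δ ≤ 1 := by
    rw [hδ]
    refine ENNReal.ofReal_le_one.mpr ?_
    rw [div_le_one (by positivity)]
    nlinarith [one_le_pow₀ (by norm_num : (1:ℝ) ≤ 2) (n := n')]
  -- eventual properties
  have hev : ∀ᶠ r in 𝓝[>] (0:ℝ),
      (ENNReal.ofReal (3/4) * μ (closedBall x₀ r) ≤ μ (E ∩ closedBall x₀ r))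
      ∧ (μ (E ∩ closedBall y₀ r) ≤ δ * μ (closedBall y₀ r))
      ∧ r < min (d/6) ((1-T)/3) := by
    have h34 : ENNReal.ofReal (3/4) < 1 := by
      rw [← ENNReal.ofReal_one]
      exact (ENNReal.ofReal_lt_ofReal_iff (by norm_num)).mpr (by norm_num)
    have h1δ : 1 - δ < 1 := ENNReal.sub_lt_self ENNReal.one_ne_top one_ne_zero hδ0
    have h3 : Set.Ioo (0:ℝ) (min (d/6) ((1-T)/3)) ∈ 𝓝[>] (0:ℝ) :=
      Ioo_mem_nhdsGT_of_mem ⟨le_refl 0, lt_min (by positivity) (by linarith)⟩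
    filter_upwards [hx₀.eventually_const_lt h34, hy₀.eventually_const_lt h1δ,
      h3, self_mem_nhdsWithin] with r hr1 hr2 hr3 hr0
    rw [Set.mem_Ioi] at hr0
    have hcbx0 : μ (closedBall x₀ r) ≠ 0 := (measure_closedBall_pos μ x₀ hr0).ne'
    have hcbxt : μ (closedBall x₀ r) ≠ ⊤ := (isCompact_closedBall x₀ r).measure_lt_top.ne
    have hcby0 : μ (closedBall y₀ r) ≠ 0 := (measure_closedBall_pos μ y₀ hr0).ne'
    have hcbyt : μ (closedBall y₀ r) ≠ ⊤ := (isCompact_closedBall y₀ r).measure_lt_top.ne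
    refine ⟨((ENNReal.lt_div_iff_mul_lt (Or.inl hcbx0) (Or.inl hcbxt)).mp hr1).le, ?_, hr3.2⟩
    have hFcb : (1-δ) * μ (closedBall y₀ r) < μ (F ∩ closedBall y₀ r) :=
      (ENNReal.lt_div_iff_mul_lt (Or.inl hcby0) (Or.inl hcbyt)).mp hr2
    by_contra hcon
    push_neg at hcon
    have hsum : μ (E ∩ closedBall y₀ r) + μ (F ∩ closedBall y₀ r) ≤ μ (closedBall y₀ r) := by
      rw [← measure_union (Set.disjoint_left.mpr fun x hx hx' => hdisj x hx.1 hx'.1)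
        (hF.inter measurableSet_closedBall)]
      exact measure_mono (by rintro x (h|h) <;> exact h.2)
    have heq : μ (closedBall y₀ r) = δ * μ (closedBall y₀ r) + (1-δ) * μ (closedBall y₀ r) := by
      rw [← add_mul, add_tsub_cancel_of_le hδ1, one_mul]
    have : μ (closedBall y₀ r) < μ (E ∩ closedBall y₀ r) + μ (F ∩ closedBall y₀ r) :=
      heq ▸ ENNReal.add_lt_add hcon hFcb
    exact absurd hsum this.not_ge
  obtain ⟨ε, hε, hIoo⟩ := mem_nhdsGT_iff_exists_Ioo_subset.mp hev
  rw [Set.mem_Ioi] at hε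
  set ρ : ℝ := ε/3 with hρdef
  have hρ : 0 < ρ := by positivity
  obtain ⟨hEx, -, hρsmall⟩ := hIoo (⟨by positivity, by rw [hρdef]; linarith⟩ : ρ ∈ Set.Ioo 0 ε)
  obtain ⟨-, hEy2, -⟩ := hIoo (⟨by positivity, by rw [hρdef]; linarith⟩ : 2*ρ ∈ Set.Ioo 0 ε)
  have hρd : ρ < d/6 := hρsmall.trans_le (min_le_left _ _)
  have hρT : ρ < (1-T)/3 := hρsmall.trans_le (min_le_right _ _)
  have hsmall : max ‖x₀‖ (‖y₀‖ + ρ) + ρ < 1 := by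
    have h1 : ‖x₀‖ ≤ T := le_max_left _ _
    have h2 : ‖y₀‖ ≤ T := le_max_right _ _
    have h3 : max ‖x₀‖ (‖y₀‖ + ρ) ≤ T + ρ := max_le (by linarith) (by linarith)
    linarith
  set β : ℝ≥0∞ := μ (ball (0:V) 1) with hβ
  have hβ0 : β ≠ 0 := (measure_ball_pos μ 0 one_pos).ne'
  have hβt : β ≠ ⊤ := ne_top_of_le_ne_top (isCompact_closedBall (0:V) 1).measure_lt_top.ne
    (measure_mono ball_subset_closedBall)
  set X : ℝ≥0∞ := μ (closedBall x₀ ρ) with hX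
  have hXval : X = ENNReal.ofReal (ρ^n') * β := by
    rw [hX, Measure.addHaar_closedBall μ x₀ hρ.le, hβ, hn']
  have hXt : X ≠ ⊤ := (isCompact_closedBall _ _).measure_lt_top.ne
  have hEy : μ (E ∩ closedBall y₀ (2*ρ)) ≤ ENNReal.ofReal (1/4) * X := by
    refine hEy2.trans (le_of_eq ?_)
    have hreal : (1/(4 * 2^n') : ℝ) * (2*ρ)^n' = 1/4 * ρ^n' := by
      rw [mul_pow]
      have h2n : (2:ℝ)^n' ≠ 0 := by positivity
      field_simp
    calc δ * μ (closedBall y₀ (2*ρ))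
        = ENNReal.ofReal ((1/(4*2^n')) * (2*ρ)^n') * β := by
          rw [hδ, Measure.addHaar_closedBall μ y₀ (by positivity), ← hn', ← mul_assoc,
            ← ENNReal.ofReal_mul (by positivity)]
      _ = ENNReal.ofReal (1/4 * ρ^n') * β := by rw [hreal]
      _ = ENNReal.ofReal (1/4) * X := by
          rw [hXval, ENNReal.ofReal_mul (by norm_num), mul_assoc]
  have htel : ∀ (m : ℕ), 1 ≤ m → ∀ h : V, ‖(m:ℝ) • h - w‖ ≤ ρ →
      X ≤ 2 * m * μ (E ∩ (fun x => x + h) ⁻¹' F) := fun m hm h hh =>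
    telescope μ E F M hsub hM x₀ y₀ ρ hρ hsmall hEx hEy m hm h hh
  -- the disjoint family of annular regions
  set A : ℕ → Set V := fun k => closedBall (((2:ℝ)^k)⁻¹ • w) (ρ/2^k) with hA
  have hApow : ∀ k : ℕ, (0:ℝ) < 2^k := fun k => by positivity
  have hAmem : ∀ k (v : V), v ∈ A k → ‖((2:ℝ)^k) • v - w‖ ≤ ρ := by
    intro k v hv
    rw [hA] at hv
    simp only [mem_closedBall, dist_eq_norm] at hv
    calc ‖(2:ℝ)^k • v - w‖ = ‖(2:ℝ)^k • (v - ((2:ℝ)^k)⁻¹ • w)‖ := by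
          rw [smul_sub, smul_inv_smul₀ (hApow k).ne']
      _ = 2^k * ‖v - ((2:ℝ)^k)⁻¹ • w‖ := by
          rw [norm_smul, Real.norm_of_nonneg (hApow k).le]
      _ ≤ 2^k * (ρ/2^k) := mul_le_mul_of_nonneg_left hv (hApow k).le
      _ = ρ := by field_simp
  have hAnorm : ∀ k (v : V), v ∈ A k → 2^k * ‖v‖ ≤ d + ρ ∧ d - ρ ≤ 2^k * ‖v‖ := by
    intro k v hv
    have h1 := hAmem k v hv
    have h2 : ‖(2:ℝ)^k • v‖ = 2^k * ‖v‖ := by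
      rw [norm_smul, Real.norm_of_nonneg (hApow k).le]
    have h3 := abs_norm_sub_norm_le ((2:ℝ)^k • v) w
    rw [h2, ← hdd] at h3
    have h4 := abs_le.mp (h3.trans h1)
    exact ⟨by linarith [h4.2], by linarith [h4.1]⟩
  have hAdisj : ∀ j k, j < k → ∀ v, v ∈ A j → v ∈ A k → False := by
    intro j k hjk v hj hk
    have h1 := hAmem j v hj
    have h2 := hAmem k v hk
    have h3 := (hAnorm k v hk).2
    have h6 : (2:ℝ)^j * 2 ≤ 2^k := by
      calc (2:ℝ)^j * 2 = 2^(j+1) := (pow_succ 2 j).symm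
        _ ≤ 2^k := pow_le_pow_right₀ (by norm_num) hjk
    have hji : (0:ℝ) ≤ 2^k - 2^j := by nlinarith [hApow j]
    have h4 : ((2:ℝ)^k - (2:ℝ)^j) * ‖v‖ ≤ 2*ρ := by
      have heq : ((2:ℝ)^k) • v - w - (((2:ℝ)^j) • v - w) = ((2:ℝ)^k - (2:ℝ)^j) • v := by
        rw [sub_smul]; abel
      have : ‖((2:ℝ)^k - (2:ℝ)^j) • v‖ ≤ 2*ρ := by
        rw [← heq]
        calc ‖((2:ℝ)^k) • v - w - (((2:ℝ)^j) • v - w)‖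
            ≤ ‖((2:ℝ)^k) • v - w‖ + ‖((2:ℝ)^j) • v - w‖ := norm_sub_le _ _
          _ ≤ 2*ρ := by linarith
      rwa [norm_smul, Real.norm_of_nonneg hji] at this
    have h8 : (2:ℝ)^j * ‖v‖ ≤ (2^k * ‖v‖)/2 := by
      have := mul_le_mul_of_nonneg_right h6 (norm_nonneg v)
      nlinarith [norm_nonneg v]
    linarith [h4, h3, hρd, hd]
  -- measurability facts
  have hmeasK : Measurable fun z : V × V => ENNReal.ofReal (1/‖z.1 - z.2‖ ^ q) := by
    apply ENNReal.measurable_ofReal.comp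
    have h1 : Measurable fun z : V × V => ‖z.1 - z.2‖ := (measurable_fst.sub measurable_snd).norm
    have h2 : Measurable fun z : V × V => ‖z.1 - z.2‖ ^ q :=
      (Real.continuous_rpow_const hq0.le).measurable.comp h1
    simpa [one_div] using h2
  have hindE : Measurable (E.indicator (1 : V → ℝ≥0∞)) := measurable_one.indicator hE
  have hindF : Measurable (F.indicator (1 : V → ℝ≥0∞)) := measurable_one.indicator hF
  have hindA : ∀ k, Measurable ((A k).indicator (1 : V → ℝ≥0∞)) := fun k =>
    measurable_one.indicator measurableSet_closedBall
  have hindE_le : ∀ x, E.indicator (1 : V → ℝ≥0∞) x ≠ ⊤ := by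
    intro x; by_cases hx : x ∈ E <;> simp [hx]
  have hindA_le : ∀ k (v : V), (A k).indicator (1 : V → ℝ≥0∞) v ≠ ⊤ := by
    intro k v; by_cases hv : v ∈ A k <;> simp [hv]
  set K : V → V → ℝ≥0∞ := fun x y => ENNReal.ofReal (1 / ‖x - y‖ ^ q) with hK
  by_contra hJ
  set c₀ : ℝ := ρ^n' * ρ^n' / (2*(d+ρ)^q) with hc₀
  have hc₀pos : 0 < c₀ := by
    rw [hc₀]
    have := Real.rpow_pos_of_pos (show (0:ℝ) < d + ρ by linarith) q
    positivity
  set C : ℝ≥0∞ := ENNReal.ofReal c₀ * (β * β) with hC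
  have hC0 : C ≠ 0 := by
    rw [hC]
    exact mul_ne_zero (by simp [ENNReal.ofReal_eq_zero, not_le, hc₀pos]) (mul_ne_zero hβ0 hβ0)
  have hCt : C ≠ ⊤ := ENNReal.mul_ne_top ENNReal.ofReal_ne_top (ENNReal.mul_ne_top hβt hβt)
  -- the per-scale lower bound
  have hperk : ∀ k : ℕ, C ≤ ∫⁻ x, ∫⁻ y, (E.indicator 1 x * F.indicator 1 y)
      * ((A k).indicator 1 (y - x) * K x y) ∂μ ∂μ := by
    intro k
    set mR : ℝ := 2^k with hmRdef
    have hmR1 : (1:ℝ) ≤ mR := one_le_pow₀ (by norm_num)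
    have hmR0 : (0:ℝ) < mR := by linarith
    set κ : ℝ≥0∞ := ENNReal.ofReal (1/((d+ρ)/mR)^q) with hκ
    -- kernel lower bound on the annular region
    have hker : ∀ x y : V, y - x ∈ A k → κ ≤ K x y := by
      intro x y hv
      have h1 := (hAnorm k _ hv).1
      have h2 := (hAnorm k _ hv).2
      have hyx : 0 < ‖y - x‖ := by
        have : 0 < d - ρ := by linarith
        nlinarith [hApow k, norm_nonneg (y - x)]
      rw [hκ, hK]
      apply ENNReal.ofReal_le_ofReal
      have hxy : ‖x - y‖ = ‖y - x‖ := norm_sub_rev x y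
      have hle : ‖y - x‖ ≤ (d+ρ)/mR := by
        rw [le_div_iff₀ hmR0, hmRdef]
        nlinarith [hApow k]
      rw [hxy]
      have hrp : 0 < ‖y - x‖ ^ q := Real.rpow_pos_of_pos hyx q
      exact one_div_le_one_div_of_le hrp (Real.rpow_le_rpow hyx.le hle hq0.le)
    -- pointwise bound of the integrand
    have hpt : ∀ x y : V, (E.indicator 1 x * F.indicator 1 y) * ((A k).indicator 1 (y-x) * κ)
        ≤ (E.indicator 1 x * F.indicator 1 y) * ((A k).indicator 1 (y-x) * K x y) := by
      intro x y
      by_cases hv : y - x ∈ A k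
      · exact mul_le_mul_right (mul_le_mul_right (hker x y hv) _) _
      · simp [Set.indicator_of_notMem hv]
    set P : ℝ≥0∞ := ∫⁻ x, ∫⁻ y, E.indicator (1 : V → ℝ≥0∞) x
      * (F.indicator (1 : V → ℝ≥0∞) y * (A k).indicator (1 : V → ℝ≥0∞) (y - x)) ∂μ ∂μ with hPdef
    -- inner translation
    have hinner : ∀ x : V, (∫⁻ y, F.indicator 1 y * (A k).indicator 1 (y - x) ∂μ)
        = ∫⁻ h', F.indicator 1 (x + h') * (A k).indicator 1 h' ∂μ := by
      intro x
      rw [← lintegral_add_left_eq_self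
        (fun y => F.indicator 1 y * (A k).indicator 1 (y - x)) x]
      simp only [add_sub_cancel_left]
    have hx_eval : ∀ h' : V,
        (∫⁻ x, E.indicator 1 x * (F.indicator 1 (x + h') * (A k).indicator 1 h') ∂μ)
        = μ (E ∩ (fun x => x + h') ⁻¹' F) * (A k).indicator 1 h' := by
      intro h'
      have hfun : (fun x => E.indicator (1 : V → ℝ≥0∞) x
            * (F.indicator (1 : V → ℝ≥0∞) (x+h') * (A k).indicator (1 : V → ℝ≥0∞) h'))
          = fun x => ((E ∩ (fun x => x + h') ⁻¹' F).indicator (1 : V → ℝ≥0∞) x)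
            * (A k).indicator (1 : V → ℝ≥0∞) h' := by
        funext x
        by_cases hx : x ∈ E <;> by_cases hxf : x + h' ∈ F <;>
          simp [Set.indicator_apply, Set.mem_inter_iff, Set.mem_preimage, hx, hxf]
      rw [hfun, lintegral_mul_const' _ _ (hindA_le k h'),
        lintegral_indicator_one (hE.inter (hF.preimage (measurable_add_const h')))]
    have hPeq : P = ∫⁻ h', μ (E ∩ (fun x => x + h') ⁻¹' F) * (A k).indicator 1 h' ∂μ := by
      rw [hPdef]
      calc (∫⁻ x, ∫⁻ y, E.indicator 1 x * (F.indicator 1 y * (A k).indicator 1 (y - x)) ∂μ ∂μ)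
          = ∫⁻ x, ∫⁻ h', E.indicator 1 x
            * (F.indicator 1 (x + h') * (A k).indicator 1 h') ∂μ ∂μ := by
            refine lintegral_congr fun x => ?_
            rw [lintegral_const_mul' _ _ (hindE_le x), hinner x,
              ← lintegral_const_mul' _ _ (hindE_le x)]
        _ = ∫⁻ h', ∫⁻ x, E.indicator 1 x
            * (F.indicator 1 (x + h') * (A k).indicator 1 h') ∂μ ∂μ := by
            refine lintegral_lintegral_swap ?_
            exact (((hindE.comp measurable_fst).mul ((hindF.comp
              (measurable_fst.add measurable_snd)).mul
              ((hindA k).comp measurable_snd)))).aemeasurable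
        _ = ∫⁻ h', μ (E ∩ (fun x => x + h') ⁻¹' F) * (A k).indicator 1 h' ∂μ :=
            lintegral_congr hx_eval
    -- lower bound for the inner measure on A k
    have hlow : ∀ h' : V, ENNReal.ofReal (1/(2*mR)) * X * (A k).indicator 1 h'
        ≤ μ (E ∩ (fun x => x + h') ⁻¹' F) * (A k).indicator 1 h' := by
      intro h'
      by_cases hv : h' ∈ A k
      · refine mul_le_mul_left ?_ _
        have hmem : ‖((2^k : ℕ):ℝ) • h' - w‖ ≤ ρ := by
          push_cast
          exact hAmem k h' hv
        have ht := htel (2^k) Nat.one_le_two_pow h' hmem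
        have hconv : (2 * ((2^k : ℕ) : ℝ≥0∞)) = ENNReal.ofReal (2 * mR) := by
          rw [ENNReal.ofReal_mul (by norm_num), hmRdef,
            ENNReal.ofReal_pow (by norm_num), ENNReal.ofReal_ofNat]
          push_cast
          ring
        calc ENNReal.ofReal (1/(2*mR)) * X
            ≤ ENNReal.ofReal (1/(2*mR)) * (2 * (2^k : ℕ) * μ (E ∩ (fun x => x + h') ⁻¹' F)) :=
              mul_le_mul_right ht _
          _ = (ENNReal.ofReal (1/(2*mR)) * ENNReal.ofReal (2*mR))
              * μ (E ∩ (fun x => x + h') ⁻¹' F) := by rw [hconv]; ring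
          _ = μ (E ∩ (fun x => x + h') ⁻¹' F) := by
              rw [← ENNReal.ofReal_mul (by positivity),
                one_div_mul_cancel (by positivity : (2*mR) ≠ 0), ENNReal.ofReal_one, one_mul]
      · simp [Set.indicator_of_notMem hv]
    have hAkvol : μ (A k) = ENNReal.ofReal ((ρ/mR)^n') * β := by
      rw [hA, hmRdef]
      exact Measure.addHaar_closedBall μ _ (by positivity)
    have hAk_eval : (∫⁻ h', ENNReal.ofReal (1/(2*mR)) * X * (A k).indicator 1 h' ∂μ)
        = ENNReal.ofReal (1/(2*mR)) * X * μ (A k) := by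
      rw [lintegral_const_mul' _ _ (ENNReal.mul_ne_top ENNReal.ofReal_ne_top hXt),
        lintegral_indicator_one measurableSet_closedBall]
    have hPlow : ENNReal.ofReal (1/(2*mR)) * X * μ (A k) ≤ P := by
      rw [hPeq, ← hAk_eval]
      exact lintegral_mono hlow
    -- the numeric identification
    have hnum : (ENNReal.ofReal (1/(2*mR)) * X * μ (A k)) * κ
        = ENNReal.ofReal (1/(2*mR) * ρ^n' * ((ρ/mR)^n' * (1/(((d+ρ)/mR)^q)))) * (β * β) := by
      rw [hXval, hAkvol, hκ]
      rw [ENNReal.ofReal_mul (by positivity), ENNReal.ofReal_mul (by positivity),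
        ENNReal.ofReal_mul (by positivity)]
      ring
    have htar : (∫⁻ x, ∫⁻ y, (E.indicator 1 x * F.indicator 1 y)
        * ((A k).indicator 1 (y-x) * κ) ∂μ ∂μ) = P * κ := by
      rw [hPdef, ← lintegral_mul_const' κ _ ENNReal.ofReal_ne_top]
      refine lintegral_congr fun x => ?_
      rw [← lintegral_mul_const' κ _ ENNReal.ofReal_ne_top]
      refine lintegral_congr fun y => ?_
      ring
    calc C = ENNReal.ofReal c₀ * (β * β) := hC
      _ ≤ ENNReal.ofReal (1/(2*mR) * ρ^n' * ((ρ/mR)^n' * (1/(((d+ρ)/mR)^q)))) * (β * β) := by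
          refine mul_le_mul_left (ENNReal.ofReal_le_ofReal ?_) _
          rw [hc₀]
          exact real_calc n' hq hρ hd hmR1
      _ = (ENNReal.ofReal (1/(2*mR)) * X * μ (A k)) * κ := hnum.symm
      _ ≤ P * κ := mul_le_mul_left hPlow κ
      _ = ∫⁻ x, ∫⁻ y, (E.indicator 1 x * F.indicator 1 y)
          * ((A k).indicator 1 (y-x) * κ) ∂μ ∂μ := htar.symm
      _ ≤ _ := lintegral_mono fun x => lintegral_mono fun y => hpt x y
  -- summing the scales
  have hsum_ind : ∀ (N : ℕ) (v : V),
      (∑ k ∈ Finset.range N, (A k).indicator (1 : V → ℝ≥0∞) v) ≤ 1 := by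
    intro N v
    by_cases hex : ∃ j ∈ Finset.range N, v ∈ A j
    · obtain ⟨j, hjN, hvj⟩ := hex
      rw [Finset.sum_eq_single_of_mem j hjN]
      · simp [Set.indicator_of_mem hvj]
      · intro k hkN hkj
        have hvk : v ∉ A k := by
          intro hvk
          rcases lt_or_gt_of_ne hkj with hlt | hlt
          · exact hAdisj k j hlt v hvk hvj
          · exact hAdisj j k hlt v hvj hvk
        simp [Set.indicator_of_notMem hvk]
    · push_neg at hex
      rw [Finset.sum_eq_zero fun k hk => by simp [Set.indicator_of_notMem (hex k hk)]]
      exact zero_le_one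
  have hGmeas : ∀ k : ℕ, Measurable fun x => ∫⁻ y, (E.indicator 1 x * F.indicator 1 y)
      * ((A k).indicator 1 (y - x) * K x y) ∂μ := by
    intro k
    apply Measurable.lintegral_prod_right (f := fun x y => (E.indicator 1 x * F.indicator 1 y)
      * ((A k).indicator 1 (y - x) * K x y))
    exact ((hindE.comp measurable_fst).mul (hindF.comp measurable_snd)).mul
      (((hindA k).comp (measurable_snd.sub measurable_fst)).mul hmeasK)
  have hsumle : ∀ N : ℕ, (N : ℝ≥0∞) * C ≤
      ∫⁻ x, ∫⁻ y, E.indicator 1 x * F.indicator 1 y * K x y ∂μ ∂μ := by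
    intro N
    have h1 : (N : ℝ≥0∞) * C = ∑ _k ∈ Finset.range N, C := by
      rw [Finset.sum_const, Finset.card_range, nsmul_eq_mul]
    rw [h1]
    refine (Finset.sum_le_sum fun k _ => hperk k).trans ?_
    have hswap1 : (∑ k ∈ Finset.range N, ∫⁻ x, ∫⁻ y, (E.indicator 1 x * F.indicator 1 y)
        * ((A k).indicator 1 (y - x) * K x y) ∂μ ∂μ)
        = ∫⁻ x, ∑ k ∈ Finset.range N, ∫⁻ y, (E.indicator 1 x * F.indicator 1 y)
        * ((A k).indicator 1 (y - x) * K x y) ∂μ ∂μ :=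
      (lintegral_finset_sum (Finset.range N) (fun k _ => hGmeas k)).symm
    rw [hswap1]
    refine lintegral_mono fun x => ?_
    have h2 : ∀ k ∈ Finset.range N, Measurable fun y => (E.indicator 1 x * F.indicator 1 y)
        * ((A k).indicator 1 (y - x) * K x y) := by
      intro k _
      have hKx : Measurable fun y : V => K x y := by
        rw [hK]
        apply ENNReal.measurable_ofReal.comp
        have h1 : Measurable fun y : V => ‖x - y‖ ^ q :=
          (Real.continuous_rpow_const hq0.le).measurable.comp
            (measurable_const.sub measurable_id).norm
        simpa [one_div] using h1
      have hAx : Measurable fun y : V => (A k).indicator (1 : V → ℝ≥0∞) (y - x) :=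
        (hindA k).comp (measurable_id.sub measurable_const)
      exact (measurable_const.mul hindF).mul (hAx.mul hKx)
    have hswap2 : (∑ k ∈ Finset.range N, ∫⁻ y, (E.indicator 1 x * F.indicator 1 y)
        * ((A k).indicator 1 (y - x) * K x y) ∂μ)
        = ∫⁻ y, ∑ k ∈ Finset.range N, (E.indicator 1 x * F.indicator 1 y)
        * ((A k).indicator 1 (y - x) * K x y) ∂μ :=
      (lintegral_finset_sum (Finset.range N) h2).symm
    rw [hswap2]
    refine lintegral_mono fun y => ?_
    calc (∑ k ∈ Finset.range N, (E.indicator 1 x * F.indicator 1 y)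
          * ((A k).indicator 1 (y - x) * K x y))
        = (E.indicator 1 x * F.indicator 1 y * K x y)
          * ∑ k ∈ Finset.range N, (A k).indicator 1 (y - x) := by
          rw [Finset.mul_sum]
          exact Finset.sum_congr rfl fun k _ => by ring
      _ ≤ (E.indicator 1 x * F.indicator 1 y * K x y) * 1 :=
          mul_le_mul_right (hsum_ind N (y - x)) _
      _ = E.indicator 1 x * F.indicator 1 y * K x y := mul_one _
  obtain ⟨N, hN⟩ := ENNReal.exists_nat_gt (ENNReal.div_lt_top hJ hC0).ne
  have hlt : (∫⁻ x, ∫⁻ y, E.indicator 1 x * F.indicator 1 y * K x y ∂μ ∂μ) < N * C :=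
    (ENNReal.div_lt_iff (Or.inl hC0) (Or.inl hCt)).mp hN
  exact absurd (hsumle N) (not_le.mpr hlt)

end Stmt10Aux


open Stmt10Aux in
theorem stmt10 (n : ℕ) (hn : 1 ≤ n) (s p : ℝ) (hs : s ∈ Set.Ioo (0:ℝ) 1)
    (hp : 1 ≤ p) (hsp : 1 ≤ s * p)
    (u : EuclideanSpace ℝ (Fin n) → ℝ) (hmeas : Measurable u)
    (hsob : (∫⁻ x in ball (0 : EuclideanSpace ℝ (Fin n)) 1,
        ∫⁻ y in ball (0 : EuclideanSpace ℝ (Fin n)) 1,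
          ENNReal.ofReal (|u x - u y| ^ p / ‖x - y‖ ^ ((n : ℝ) + s * p))) < ⊤)
    (a b : ℝ) (hab : a < b)
    (ha : 0 < volume {x ∈ ball (0 : EuclideanSpace ℝ (Fin n)) 1 | u x ≤ a})
    (hb : 0 < volume {x ∈ ball (0 : EuclideanSpace ℝ (Fin n)) 1 | b ≤ u x}) :
    0 < volume {x ∈ ball (0 : EuclideanSpace ℝ (Fin n)) 1 | a < u x ∧ u x < b} := by
  classical
  by_contra hM0
  rw [not_lt] at hM0
  set q : ℝ := (n : ℝ) + s * p with hqdef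
  have hq0 : 0 < q := by
    have : (0:ℝ) ≤ (n:ℝ) := Nat.cast_nonneg n
    rw [hqdef]; linarith
  set E := {x ∈ ball (0 : EuclideanSpace ℝ (Fin n)) 1 | u x ≤ a} with hEdef
  set F := {x ∈ ball (0 : EuclideanSpace ℝ (Fin n)) 1 | b ≤ u x} with hFdef
  set M := {x ∈ ball (0 : EuclideanSpace ℝ (Fin n)) 1 | a < u x ∧ u x < b} with hMdef
  have hMvol : volume M = 0 := le_antisymm hM0 zero_le
  have hE : MeasurableSet E := by
    have he : E = ball (0 : EuclideanSpace ℝ (Fin n)) 1 ∩ u ⁻¹' (Set.Iic a) := by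
      ext x; simp [hEdef, Set.mem_setOf_eq]
    rw [he]; exact measurableSet_ball.inter (hmeas measurableSet_Iic)
  have hF : MeasurableSet F := by
    have he : F = ball (0 : EuclideanSpace ℝ (Fin n)) 1 ∩ u ⁻¹' (Set.Ici b) := by
      ext x; simp [hFdef, Set.mem_setOf_eq]
    rw [he]; exact measurableSet_ball.inter (hmeas measurableSet_Ici)
  have hEB : E ⊆ ball (0 : EuclideanSpace ℝ (Fin n)) 1 := fun x hx => hx.1
  have hFB : F ⊆ ball (0 : EuclideanSpace ℝ (Fin n)) 1 := fun x hx => hx.1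
  have hdisj : ∀ x, x ∈ E → x ∈ F → False := by
    intro x hxE hxF
    have h1 : u x ≤ a := hxE.2
    have h2 : b ≤ u x := hxF.2
    linarith
  have hsub : ∀ x, x ∈ ball (0 : EuclideanSpace ℝ (Fin n)) 1 → x ∉ E → x ∈ F ∪ M := by
    intro x hx hxE
    have hua : a < u x := by
      by_contra hcon
      exact hxE ⟨hx, not_lt.mp hcon⟩
    rcases le_or_gt b (u x) with hub | hub
    · exact Or.inl ⟨hx, hub⟩
    · exact Or.inr ⟨hx, hua, hub⟩
  have hqfin : (Module.finrank ℝ (EuclideanSpace ℝ (Fin n)) : ℝ) + 1 ≤ q := by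
    rw [finrank_euclideanSpace_fin, hqdef]
    linarith
  have hcore := core (volume : Measure (EuclideanSpace ℝ (Fin n))) q hqfin E F M hE hF
    hEB hFB hdisj hsub hMvol ha.ne' hb.ne'
  set c : ℝ≥0∞ := ENNReal.ofReal ((b-a)^p) with hcdef
  have hba : (0:ℝ) < b - a := by linarith
  have hc0 : c ≠ 0 := by
    rw [hcdef]
    simp only [ne_eq, ENNReal.ofReal_eq_zero, not_le]
    exact Real.rpow_pos_of_pos hba p
  have key : ∀ x, x ∈ E → ∀ y, y ∈ F →
      c * ENNReal.ofReal (1/‖x - y‖ ^ q)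
      ≤ ENNReal.ofReal (|u x - u y| ^ p / ‖x - y‖ ^ q) := by
    intro x hxE y hyF
    have hxy : x ≠ y := by
      intro hth
      have h1 : u x ≤ a := hxE.2
      have h2 : b ≤ u y := hyF.2
      rw [← hth] at h2
      linarith
    have hD : 0 < ‖x - y‖ ^ q :=
      Real.rpow_pos_of_pos (norm_pos_iff.mpr (sub_ne_zero.mpr hxy)) q
    rw [hcdef, ← ENNReal.ofReal_mul (Real.rpow_pos_of_pos hba p).le]
    apply ENNReal.ofReal_le_ofReal
    have h1 : b - a ≤ |u x - u y| := by
      rw [abs_sub_comm]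
      calc b - a ≤ u y - u x := sub_le_sub hyF.2 hxE.2
        _ ≤ |u y - u x| := le_abs_self _
    have h2 : (b-a)^p ≤ |u x - u y|^p := Real.rpow_le_rpow hba.le h1 (by linarith)
    calc (b-a)^p * (1/‖x-y‖^q) = (b-a)^p / ‖x-y‖^q := by rw [mul_one_div]
      _ ≤ |u x - u y|^p / ‖x-y‖^q := by gcongr
  have hle : c * (∫⁻ x, ∫⁻ y, E.indicator 1 x * F.indicator 1 y
      * ENNReal.ofReal (1 / ‖x - y‖ ^ q) ∂volume ∂volume)
      ≤ ∫⁻ x in ball (0 : EuclideanSpace ℝ (Fin n)) 1,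
          ∫⁻ y in ball (0 : EuclideanSpace ℝ (Fin n)) 1,
          ENNReal.ofReal (|u x - u y| ^ p / ‖x - y‖ ^ q) ∂volume ∂volume := by
    rw [← lintegral_const_mul' c _ ENNReal.ofReal_ne_top,
      ← lintegral_indicator measurableSet_ball]
    refine lintegral_mono fun x => ?_
    by_cases hxE : x ∈ E
    · have hxB : x ∈ ball (0 : EuclideanSpace ℝ (Fin n)) 1 := hxE.1
      rw [Set.indicator_of_mem hxB, ← lintegral_indicator measurableSet_ball,
        ← lintegral_const_mul' c _ ENNReal.ofReal_ne_top]
      refine lintegral_mono fun y => ?_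
      rw [Set.indicator_of_mem hxE, Pi.one_apply, one_mul]
      by_cases hyF : y ∈ F
      · rw [Set.indicator_of_mem hyF, Pi.one_apply, one_mul,
          Set.indicator_of_mem (hFB hyF)]
        exact key x hxE y hyF
      · rw [Set.indicator_of_notMem hyF]
        simp
    · rw [Set.indicator_of_notMem hxE]
      simp
  have htop : (⊤:ℝ≥0∞) ≤ ∫⁻ x in ball (0 : EuclideanSpace ℝ (Fin n)) 1,
      ∫⁻ y in ball (0 : EuclideanSpace ℝ (Fin n)) 1,
      ENNReal.ofReal (|u x - u y| ^ p / ‖x - y‖ ^ q) ∂volume ∂volume := by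
    calc (⊤:ℝ≥0∞) = c * ⊤ := (ENNReal.mul_top hc0).symm
      _ = c * (∫⁻ x, ∫⁻ y, E.indicator 1 x * F.indicator 1 y
          * ENNReal.ofReal (1 / ‖x - y‖ ^ q) ∂volume ∂volume) := by rw [hcore]
      _ ≤ _ := hle
  exact absurd htop (not_le.mpr hsob)
end
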